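/- arXiv:1503.03555 — 6 statements merged into one kernel-verified Lean document; each statement's English description precedes it below -/
import Mathlib

section
/- Let κ₁ > 0 and κ₂ ≠ 0 with κ₁ + 4κ₂ > 0, and define λ = -1 - (κ₁/(2κ₂))·(1 - √(1 + 4κ₂/κ₁)). Then |λ| ≤ 1. -/
theorem abs_lambda_le_one (κ₁ κ₂ : ℝ) (hκ₁ : κ₁ > 0) (hκ₂ : κ₂ ≠ 0)
    (hκ : κ₁ + 4 * κ₂ > 0) :
    |(-1 - κ₁ / (2 * κ₂) * (1 - Real.sqrt (1 + 4 * κ₂ / κ₁)))| ≤ 1 := by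
  set s := Real.sqrt (1 + 4 * κ₂ / κ₁) with hsdef
  have hpos : (0:ℝ) < 1 + 4 * κ₂ / κ₁ := by
    have h : 1 + 4 * κ₂ / κ₁ = (κ₁ + 4 * κ₂) / κ₁ := by field_simp
    rw [h]; positivity
  have hs0 : 0 ≤ s := Real.sqrt_nonneg _
  have hsq : s ^ 2 = 1 + 4 * κ₂ / κ₁ := Real.sq_sqrt hpos.le
  have h1s : (0:ℝ) < 1 + s := by linarith
  have key : -1 - κ₁ / (2 * κ₂) * (1 - s) = (1 - s) / (1 + s) := by
    have h1 : (1 - s) * (1 + s) = -(4 * κ₂ / κ₁) := by nlinarith [hsq]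
    field_simp at h1 ⊢
    nlinarith [h1]
  rw [key, abs_div, abs_of_pos h1s, div_le_one h1s]
  exact abs_le.mpr ⟨by linarith, by linarith⟩
end

section
/- Suppose u : ℤ → ℝ satisfies κ₂(u_{j+2} - 2u_j + u_{j-2}) + κ₁(u_{j+1} - 2u_j + u_{j-1}) = 0 for all j ≤ -1. Then the discrete traction T_j := -κ₁(u_{j+1} - u_j) - κ₂(u_{j+1} - u_{j-1}) - κ₂(u_{j+2} - u_j) is independent of j for j ≤ -1; i.e., T_{j-1} = T_j for all j ≤ -1. -/
theorem traction_conserved (κ₁ κ₂ : ℝ) (u : ℤ → ℝ)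
    (heq : ∀ j : ℤ, j ≤ -1 →
      κ₂ * (u (j + 2) - 2 * u j + u (j - 2)) +
        κ₁ * (u (j + 1) - 2 * u j + u (j - 1)) = 0)
    (T : ℤ → ℝ)
    (hT : ∀ j : ℤ, T j =
      -κ₁ * (u (j + 1) - u j) - κ₂ * (u (j + 1) - u (j - 1)) -
        κ₂ * (u (j + 2) - u j)) :
    ∀ j : ℤ, j ≤ -1 → T (j - 1) = T j := by
  intro j hj
  have h := heq j hj
  rw [hT (j - 1), hT j]
  have e1 : j - 1 + 1 = j := by ring
  have e2 : j - 1 - 1 = j - 2 := by ring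
  have e3 : j - 1 + 2 = j + 1 := by ring
  rw [e1, e2, e3]
  linarith
end

section
/- Let κ₁ > 0, κ = κ₁ + 4κ₂ > 0, λ the root of the characteristic polynomial with |λ| < 1, and T ∈ ℝ. Given boundary values u₀, u₁ ∈ ℝ, define u_j for j ≤ -1 by u_j = A + Bj + Dλ^{-j} with A = (-λ⁻¹u₀ + u₁ + T/κ)/(1 - λ⁻¹), B = -T/κ, D = (u₀ - u₁ - T/κ)/(1 - λ⁻¹). Then u_{-1} = (1+λ)u₀ - λu₁ + (1-λ)T/κ and u_{-2} = (1+λ)u_{-1} - λu₀ + (1-λ)T/κ. -/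
theorem traction_bc_formulas (κ₁ κ₂ κ lam T u₀ u₁ : ℝ)
    (hκ₁ : κ₁ > 0) (hκdef : κ = κ₁ + 4 * κ₂) (hκ : κ > 0)
    (hlam : |lam| < 1) (hlam0 : lam ≠ 0) (hlam1 : lam ≠ 1)
    (A B D : ℝ)
    (hA : A = (-lam⁻¹ * u₀ + u₁ + T / κ) / (1 - lam⁻¹))
    (hB : B = -T / κ)
    (hD : D = (u₀ - u₁ - T / κ) / (1 - lam⁻¹))
    (u : ℤ → ℝ)
    (hu : ∀ j : ℤ, j ≤ -1 → u j = A + B * (j : ℝ) + D * lam ^ (-j)) :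
    u (-1) = (1 + lam) * u₀ - lam * u₁ + (1 - lam) * T / κ ∧
    u (-2) = (1 + lam) * u (-1) - lam * u₀ + (1 - lam) * T / κ := by
  have hκ0 : κ ≠ 0 := ne_of_gt hκ
  have h1 : (1 : ℝ) - lam⁻¹ ≠ 0 := by
    intro h
    apply hlam1
    field_simp at h
    linarith
  have e1 := hu (-1) (by norm_num)
  have e2 := hu (-2) (by norm_num)
  norm_num [zpow_ofNat] at e1 e2
  have hl1 : lam - 1 ≠ 0 := sub_ne_zero.mpr hlam1
  have hA' : A * (lam - 1) * κ = -u₀ * κ + lam * u₁ * κ + lam * T := by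
    rw [hA]; field_simp
  have hD' : D * (lam - 1) * κ = lam * (u₀ * κ - u₁ * κ - T) := by
    rw [hD]; field_simp
  have hB' : B * κ = -T := by rw [hB]; field_simp
  have hinv : κ⁻¹ * κ = 1 := inv_mul_cancel₀ hκ0
  have hlk : (lam - 1) * κ ≠ 0 := mul_ne_zero hl1 hκ0
  constructor
  · rw [e1]
    refine mul_right_cancel₀ hlk ?_
    linear_combination hA' - (lam - 1) * hB' + lam * hD' -
      (1 - lam) * T * (lam - 1) * hinv
  · rw [e1, e2]
    refine mul_right_cancel₀ hlk ?_
    linear_combination (-lam) * hA' + (lam - 1) ^ 2 * hB' + (-lam) * hD' -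
      (1 - lam) * T * (lam - 1) * hinv
end

section
/- Let u : ℤ → ℝ be finitely supported on {1, 2, ...} with u₀ = 0, and set u_{-1} = -λu₁, u_{-2} = (1+λ)u_{-1} for a real parameter λ. Then ∑_{j≥0} u_j·(Δ_d Δ_d u)_j = ∑_{j≥0} ((Δ_d u)_j)² + λ(1-λ)u₁², where (Δ_d u)_j = u_{j+1} - 2u_j + u_{j-1}. -/
/-- The discrete Laplacian on sequences indexed by `ℤ`. -/
def discLap (u : ℤ → ℝ) : ℤ → ℝ := fun j => u (j + 1) - 2 * u j + u (j - 1)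

/-- Boundary flux for the telescoping identity. -/
def biharmFlux (u : ℤ → ℝ) (j : ℤ) : ℝ :=
  u j * (discLap u j - discLap u (j - 1)) - (u j - u (j - 1)) * discLap u j

lemma biharm_step (u : ℤ → ℝ) (j : ℤ) :
    u j * discLap (discLap u) j - (discLap u j) ^ 2 =
      biharmFlux u (j + 1) - biharmFlux u j := by
  simp only [biharmFlux, discLap]
  rw [show j + 1 + 1 = j + 2 by ring, show j + 1 - 1 = j by ring,
    show j - 1 + 1 = j by ring, show j - 1 - 1 = j - 2 by ring]
  ring

theorem biharmonic_quadratic_form (lam : ℝ) (u : ℤ → ℝ)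
    (hsupp : ∃ N : ℕ, ∀ j : ℤ, (N : ℤ) ≤ j → u j = 0)
    (hneg : ∀ j : ℤ, j ≤ -3 → u j = 0)
    (h0 : u 0 = 0)
    (hm1 : u (-1) = -lam * u 1)
    (hm2 : u (-2) = (1 + lam) * u (-1)) :
    ∑' j : ℕ, u (j : ℤ) * discLap (discLap u) (j : ℤ) =
      (∑' j : ℕ, (discLap u (j : ℤ)) ^ 2) + lam * (1 - lam) * (u 1) ^ 2 := by
  obtain ⟨N, hN⟩ := hsupp
  -- vanishing of discLap and discLap∘discLap far out
  have hL : ∀ j : ℤ, (N : ℤ) + 1 ≤ j → discLap u j = 0 := by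
    intro j hj
    simp only [discLap]
    rw [hN _ (by omega), hN _ (by omega), hN _ (by omega)]; ring
  have hLL : ∀ j : ℤ, (N : ℤ) + 2 ≤ j → discLap (discLap u) j = 0 := by
    intro j hj
    have e : discLap (discLap u) j
        = discLap u (j + 1) - 2 * discLap u j + discLap u (j - 1) := rfl
    rw [e, hL _ (by omega), hL _ (by omega), hL _ (by omega)]; ring
  have h1 : ∑' j : ℕ, u (j : ℤ) * discLap (discLap u) (j : ℤ) =
      ∑ j ∈ Finset.range (N + 2), u (j : ℤ) * discLap (discLap u) (j : ℤ) := by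
    apply tsum_eq_sum
    intro j hj
    rw [hLL _ (by simp at hj; push_cast; omega)]; ring
  have h2 : ∑' j : ℕ, (discLap u (j : ℤ)) ^ 2 =
      ∑ j ∈ Finset.range (N + 2), (discLap u (j : ℤ)) ^ 2 := by
    apply tsum_eq_sum
    intro j hj
    rw [hL _ (by simp at hj; push_cast; omega)]; ring
  rw [h1, h2]
  have key : ∑ j ∈ Finset.range (N + 2),
      (u (j : ℤ) * discLap (discLap u) (j : ℤ) - (discLap u (j : ℤ)) ^ 2) =
      biharmFlux u ((N : ℤ) + 2) - biharmFlux u 0 :=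
    calc ∑ j ∈ Finset.range (N + 2),
        (u (j : ℤ) * discLap (discLap u) (j : ℤ) - (discLap u (j : ℤ)) ^ 2)
        = ∑ j ∈ Finset.range (N + 2),
          (biharmFlux u ((j + 1 : ℕ) : ℤ) - biharmFlux u (j : ℤ)) := by
          apply Finset.sum_congr rfl
          intro j _
          rw [biharm_step u (j : ℤ)]
          norm_cast
      _ = biharmFlux u (((N + 2 : ℕ)) : ℤ) - biharmFlux u ((0 : ℕ) : ℤ) :=
          Finset.sum_range_sub (fun n : ℕ => biharmFlux u (n : ℤ)) (N + 2)
      _ = biharmFlux u ((N : ℤ) + 2) - biharmFlux u 0 := by norm_cast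
  have hF1 : biharmFlux u ((N : ℤ) + 2) = 0 := by
    simp only [biharmFlux, discLap]
    rw [show (N : ℤ) + 2 + 1 = N + 3 by ring, show (N : ℤ) + 2 - 1 = N + 1 by ring,
      show (N : ℤ) + 1 + 1 = N + 2 by ring, show (N : ℤ) + 1 - 1 = N by ring]
    rw [hN _ (by omega), hN _ (by omega), hN _ (by omega), hN _ (by omega)]; ring
  have hF0 : biharmFlux u 0 = -(lam * (1 - lam) * (u 1) ^ 2) := by
    simp only [biharmFlux, discLap]
    norm_num
    rw [h0, hm2, hm1]
    ring
  have := key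
  rw [Finset.sum_sub_distrib, hF1, hF0] at this
  linarith
end

section
/- Let κ₁ > 0, κ = κ₁ + 4κ₂ > 0, κ₂ ≠ 0, and λ the characteristic root with |λ| ≤ 1 and -κ₂λ ≥ 0. Let u be finitely supported on positive integers with u₀ = 0, with u_{-1} = -λu₁ and u_{-2} = (1+λ)u_{-1}. Define (H₀u)_j = -κ₂(u_{j+2} - 2u_j + u_{j-2}) - κ₁(u_{j+1} - 2u_j + u_{j-1}) for j ≥ 0. Then ⟨u, H₀u⟩ = κ∑_{j≥0}(u_{j+1}-u_j)² - κ₂∑_{j≥0}((Δ_d u)_j)² - κ₂λ(1-λ)u₁² ≥ κ∑_{j≥0}(u_{j+1}-u_j)² - κ₂∑_{j≥0}((Δ_d u)_j)². -/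
/-- The linearized force operator of the harmonic chain. -/
def Hop (κ₁ κ₂ : ℝ) (u : ℤ → ℝ) : ℤ → ℝ := fun j =>
  -κ₂ * (u (j + 2) - 2 * u j + u (j - 2)) - κ₁ * (u (j + 1) - 2 * u j + u (j - 1))

/-- Boundary term for summation by parts. -/
def Bd (κ₁ κ₂ : ℝ) (u : ℤ → ℝ) (j : ℤ) : ℝ :=
  κ₂ * (2 * (u (j + 1) - u j) ^ 2 - (u (j + 1) - 2 * u j + u (j - 1)) ^ 2
    - u j ^ 2 - u (j + 1) ^ 2 + u (j - 2) * u j + u (j - 1) * u (j + 1))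
  + κ₁ * (u (j - 1) * u j - u j ^ 2)

lemma Bd_step (κ₁ κ₂ : ℝ) (u : ℤ → ℝ) (j : ℤ) :
    u j * Hop κ₁ κ₂ u j
      - ((κ₁ + 4 * κ₂) * (u (j + 1) - u j) ^ 2 - κ₂ * (discLap u j) ^ 2)
      = Bd κ₁ κ₂ u (j + 1) - Bd κ₁ κ₂ u j := by
  simp only [Bd, Hop, discLap]
  have e1 : j + 1 + 1 = j + 2 := by ring
  have e2 : j + 1 - 1 = j := by ring
  have e3 : j + 1 - 2 = j - 1 := by ring
  rw [e1, e2, e3]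
  ring

lemma key_sum (κ₁ κ₂ lam : ℝ) (u : ℤ → ℝ)
    (h0 : u 0 = 0) (hm1 : u (-1) = -lam * u 1) (n : ℕ) :
    ∑ j ∈ Finset.range n, u (j : ℤ) * Hop κ₁ κ₂ u (j : ℤ) =
      (κ₁ + 4 * κ₂) * (∑ j ∈ Finset.range n, (u ((j : ℤ) + 1) - u (j : ℤ)) ^ 2) -
        κ₂ * (∑ j ∈ Finset.range n, (discLap u (j : ℤ)) ^ 2)
        - κ₂ * lam * (1 - lam) * (u 1) ^ 2 + Bd κ₁ κ₂ u (n : ℤ) := by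
  induction n with
  | zero =>
    simp only [Finset.range_zero, Finset.sum_empty, Nat.cast_zero]
    simp only [Bd]
    norm_num [h0, hm1]
    ring
  | succ n ih =>
    rw [Finset.sum_range_succ, Finset.sum_range_succ, Finset.sum_range_succ, ih]
    have := Bd_step κ₁ κ₂ u (n : ℤ)
    push_cast
    linarith [this]

theorem stability_quadratic_form (κ₁ κ₂ κ lam : ℝ)
    (hκ₁ : κ₁ > 0) (hκ₂ : κ₂ ≠ 0) (hκdef : κ = κ₁ + 4 * κ₂) (hκ : κ > 0)
    (hlam : |lam| ≤ 1) (hlam2 : -κ₂ * lam ≥ 0)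
    (u : ℤ → ℝ)
    (hsupp : ∃ N : ℕ, ∀ j : ℤ, (N : ℤ) ≤ j → u j = 0)
    (hneg : ∀ j : ℤ, j ≤ -3 → u j = 0)
    (h0 : u 0 = 0)
    (hm1 : u (-1) = -lam * u 1)
    (hm2 : u (-2) = (1 + lam) * u (-1)) :
    ∑' j : ℕ, u (j : ℤ) * Hop κ₁ κ₂ u (j : ℤ) =
      κ * (∑' j : ℕ, (u ((j : ℤ) + 1) - u (j : ℤ)) ^ 2) -
        κ₂ * (∑' j : ℕ, (discLap u (j : ℤ)) ^ 2) - κ₂ * lam * (1 - lam) * (u 1) ^ 2 ∧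
    ∑' j : ℕ, u (j : ℤ) * Hop κ₁ κ₂ u (j : ℤ) ≥
      κ * (∑' j : ℕ, (u ((j : ℤ) + 1) - u (j : ℤ)) ^ 2) -
        κ₂ * (∑' j : ℕ, (discLap u (j : ℤ)) ^ 2) := by
  obtain ⟨N, hN⟩ := hsupp
  have h1 : ∑' j : ℕ, u (j : ℤ) * Hop κ₁ κ₂ u (j : ℤ)
      = ∑ j ∈ Finset.range (N + 1), u (j : ℤ) * Hop κ₁ κ₂ u (j : ℤ) := by
    refine tsum_eq_sum ?_
    intro j hj
    have hj' : (N : ℤ) ≤ (j : ℤ) := by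
      have := Finset.mem_range.not.mp hj
      omega
    rw [hN _ hj', zero_mul]
  have h2 : ∑' j : ℕ, (u ((j : ℤ) + 1) - u (j : ℤ)) ^ 2
      = ∑ j ∈ Finset.range (N + 1), (u ((j : ℤ) + 1) - u (j : ℤ)) ^ 2 := by
    refine tsum_eq_sum ?_
    intro j hj
    have hj' : (N : ℤ) ≤ (j : ℤ) := by
      have := Finset.mem_range.not.mp hj
      omega
    rw [hN _ hj', hN _ (by omega), sub_zero]
    norm_num
  have h3 : ∑' j : ℕ, (discLap u (j : ℤ)) ^ 2
      = ∑ j ∈ Finset.range (N + 1), (discLap u (j : ℤ)) ^ 2 := by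
    refine tsum_eq_sum ?_
    intro j hj
    have hj' : (N : ℤ) + 1 ≤ (j : ℤ) := by
      have := Finset.mem_range.not.mp hj
      omega
    simp only [discLap]
    rw [hN _ (by omega), hN _ (by omega), hN _ (by omega)]
    norm_num
  have hB : Bd κ₁ κ₂ u ((N + 1 : ℕ) : ℤ) = 0 := by
    simp only [Bd]
    push_cast
    rw [hN ((N : ℤ) + 1 + 1) (by omega), hN ((N : ℤ) + 1) (by omega),
      hN ((N : ℤ) + 1 - 1) (by omega)]
    ring
  have hmain : ∑' j : ℕ, u (j : ℤ) * Hop κ₁ κ₂ u (j : ℤ) =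
      κ * (∑' j : ℕ, (u ((j : ℤ) + 1) - u (j : ℤ)) ^ 2) -
        κ₂ * (∑' j : ℕ, (discLap u (j : ℤ)) ^ 2) - κ₂ * lam * (1 - lam) * (u 1) ^ 2 := by
    rw [h1, h2, h3, hκdef, key_sum κ₁ κ₂ lam u h0 hm1 (N + 1), hB, add_zero]
  refine ⟨hmain, ?_⟩
  rw [hmain]
  have hlam1 : 1 - lam ≥ 0 := by
    have := abs_le.mp hlam
    linarith [this.2]
  have : -κ₂ * lam * (1 - lam) * (u 1) ^ 2 ≥ 0 := by
    apply mul_nonneg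
    · exact mul_nonneg hlam2 hlam1
    · positivity
  nlinarith [this]
end

section
/- Let κ₁ > 0, κ₂ < 0 with κ = κ₁ + 4κ₂ > 0, and λ ∈ (0,1) the characteristic root. Then the sequence ũ_j = λ^j - 1 (j ≥ -2) satisfies: (i) -κ₂(ũ_{j+2} - 2ũ_j + ũ_{j-2}) - κ₁(ũ_{j+1} - 2ũ_j + ũ_{j-1}) = 0 for all j ≥ 0; (ii) ũ_{-1} = (1+λ⁻¹)ũ₀ - λ⁻¹ũ₁ and ũ_{-2} = (1+λ⁻¹)ũ_{-1} - λ⁻¹ũ₀; (iii) ũ₀ = 0; (iv) ũ_j/j → 0 as j → ∞. Hence the homogeneous boundary value problem with the alternative boundary condition using λ⁻¹ admits a nonzero solution. -/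
theorem alternative_bc_nonuniqueness (κ₁ κ₂ lam : ℝ)
    (hκ₁ : κ₁ > 0) (hκ₂ : κ₂ < 0) (hκ : κ₁ + 4 * κ₂ > 0)
    (hlam : lam ∈ Set.Ioo (0 : ℝ) 1)
    (hchar : κ₂ * lam ^ 4 + κ₁ * lam ^ 3 - 2 * (κ₁ + κ₂) * lam ^ 2 +
      κ₁ * lam + κ₂ = 0)
    (v : ℤ → ℝ) (hv : ∀ j : ℤ, -2 ≤ j → v j = lam ^ j - 1) :
    (∀ j : ℤ, 0 ≤ j →
      -κ₂ * (v (j + 2) - 2 * v j + v (j - 2)) -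
        κ₁ * (v (j + 1) - 2 * v j + v (j - 1)) = 0) ∧
    v (-1) = (1 + lam⁻¹) * v 0 - lam⁻¹ * v 1 ∧
    v (-2) = (1 + lam⁻¹) * v (-1) - lam⁻¹ * v 0 ∧
    v 0 = 0 ∧
    Filter.Tendsto (fun n : ℕ => v (n : ℤ) / (n : ℝ)) Filter.atTop (nhds 0) ∧
    v 1 ≠ 0 := by
  obtain ⟨hl0, hl1⟩ := hlam
  have hlne : lam ≠ 0 := ne_of_gt hl0
  have hpow : ∀ (j : ℤ) (k : ℕ), lam ^ (j - 2 + (k : ℤ)) = lam ^ (j - 2) * lam ^ k := by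
    intro j k
    rw [zpow_add₀ hlne, zpow_natCast]
  refine ⟨?_, ?_, ?_, ?_, ?_, ?_⟩
  · intro j hj
    rw [hv (j + 2) (by omega), hv (j + 1) (by omega), hv j (by omega),
        hv (j - 1) (by omega), hv (j - 2) (by omega)]
    have e4 : lam ^ (j + 2) = lam ^ (j - 2) * lam ^ (4 : ℕ) := by
      rw [← hpow]; congr 1; omega
    have e3 : lam ^ (j + 1) = lam ^ (j - 2) * lam ^ (3 : ℕ) := by
      rw [← hpow]; congr 1; omega
    have e2 : lam ^ j = lam ^ (j - 2) * lam ^ (2 : ℕ) := by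
      rw [← hpow]; congr 1; omega
    have e1 : lam ^ (j - 1) = lam ^ (j - 2) * lam ^ (1 : ℕ) := by
      rw [← hpow]; congr 1; omega
    rw [e4, e3, e2, e1]
    linear_combination (-lam ^ (j - 2)) * hchar
  · rw [hv (-1) (by norm_num), hv 0 (by norm_num), hv 1 (by norm_num)]
    rw [show ((-1 : ℤ)) = -(1 : ℤ) by ring, zpow_neg, zpow_one, zpow_zero]
    field_simp
    ring
  · rw [hv (-2) (by norm_num), hv (-1) (by norm_num), hv 0 (by norm_num)]
    rw [show ((-2 : ℤ)) = -(2 : ℤ) by ring, show ((-1 : ℤ)) = -(1 : ℤ) by ring,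
        zpow_neg, zpow_neg, zpow_one, zpow_zero]
    have : lam ^ (2 : ℤ) = lam ^ (2 : ℕ) := by norm_cast
    rw [this]
    field_simp
    ring
  · rw [hv 0 (by norm_num), zpow_zero]; ring
  · have h1 : Filter.Tendsto (fun n : ℕ => lam ^ n - 1) Filter.atTop (nhds (-1)) := by
      have := tendsto_pow_atTop_nhds_zero_of_lt_one (le_of_lt hl0) hl1
      simpa using this.sub (tendsto_const_nhds (x := (1 : ℝ)))
    have h2 : Filter.Tendsto (fun n : ℕ => ((n : ℝ))⁻¹) Filter.atTop (nhds 0) :=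
      tendsto_inv_atTop_zero.comp tendsto_natCast_atTop_atTop
    have := h1.mul h2
    simp only [mul_zero] at this
    refine this.congr' ?_
    filter_upwards [Filter.eventually_atTop.mpr ⟨1, fun n hn => hn⟩] with n hn
    rw [hv (n : ℤ) (by omega), zpow_natCast, div_eq_mul_inv]
  · rw [hv 1 (by norm_num), zpow_one]
    intro h
    have : lam = 1 := by linarith
    linarith
end
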